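/- arXiv:math/0606552 — 2 statements merged into one kernel-verified Lean document; each statement's English description precedes it below -/
import Mathlib

section
/- Let R be a commutative ring, m a natural number, and C, B, Q, P elements of R with P + Q = m − 1. Define A_{2m}(C,B,Q) = Σ_{ℓ=0}^{m} (−1)^{m−ℓ} binom(m,ℓ) · Π_{i=0}^{ℓ−1} (C+Q−2i)(C−Q+2i) · Π_{j=0}^{m−ℓ−1} (B+P−2j)(B−P+2j), and G_{2m}(C,B) = Π_{i=0}^{m−1} (C+B+m−1−2i)(C−B+m−1−2i). Then A_{2m}(C,B,Q) = G_{2m}(C,B). In particular A_{2m}(C,B,Q) does not depend on Q. -/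
/-- `A_{2m}(C,B,Q)` with explicit weight `P`. -/
def ambientPower {R : Type*} [CommRing R] (m : ℕ) (C B Q P : R) : R :=
  ∑ ℓ ∈ Finset.range (m + 1),
    (-1 : R) ^ (m - ℓ) * (Nat.choose m ℓ : R) *
      (∏ i ∈ Finset.range ℓ, (C + Q - 2 * (i : R)) * (C - Q + 2 * (i : R))) *
      (∏ j ∈ Finset.range (m - ℓ), (B + P - 2 * (j : R)) * (B - P + 2 * (j : R)))

/-- `G_{2m}(C,B)`. -/
def productForm {R : Type*} [CommRing R] (m : ℕ) (C B : R) : R :=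
  ∏ i ∈ Finset.range m,
    (C + B + (m : R) - 1 - 2 * (i : R)) * (C - B + (m : R) - 1 - 2 * (i : R))

namespace Stmt8Aux

variable {R : Type*} [CommRing R]

/-- The basic product `∏_{i<l} (C+Q-2i)(C-Q+2i)`. -/
def fpow (C Q : R) (l : ℕ) : R :=
  ∏ i ∈ Finset.range l, (C + Q - 2 * (i : R)) * (C - Q + 2 * (i : R))

lemma fpow_zero (C Q : R) : fpow C Q 0 = 1 := by simp [fpow]

lemma fpow_succ (C Q : R) (l : ℕ) :
    fpow C Q (l + 1) = fpow C Q l * ((C + Q - 2 * (l : R)) * (C - Q + 2 * (l : R))) :=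
  Finset.prod_range_succ _ _

lemma fpow_succ' (C Q : R) (l : ℕ) :
    fpow C Q (l + 1) = (C + Q) * (C - Q) * fpow C (Q - 2) l := by
  unfold fpow
  rw [Finset.prod_range_succ', mul_comm]
  congr 1
  · push_cast; ring
  · refine Finset.prod_congr rfl fun i _ => ?_
    push_cast; ring

lemma ambientPower_eq' (m : ℕ) (C B Q P : R) :
    ambientPower m C B Q P = ∑ ℓ ∈ Finset.range (m + 1),
      (-1 : R) ^ (m - ℓ) * (Nat.choose m ℓ : R) * (fpow C Q ℓ * fpow B P (m - ℓ)) := by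
  unfold ambientPower fpow
  exact Finset.sum_congr rfl fun ℓ _ => by ring

/-- Pascal-split of `A_{n+1}`. -/
lemma AP_split (n : ℕ) (C B Q P : R) :
    ambientPower (n + 1) C B Q P
      = (∑ ℓ ∈ Finset.range (n + 1),
          (-1 : R) ^ (n - ℓ) * (Nat.choose n ℓ : R) * (fpow C Q (ℓ + 1) * fpow B P (n - ℓ)))
      - (∑ ℓ ∈ Finset.range (n + 1),
          (-1 : R) ^ (n - ℓ) * (Nat.choose n ℓ : R) * (fpow C Q ℓ * fpow B P (n - ℓ + 1))) := by
  rw [ambientPower_eq', Finset.sum_range_succ']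
  simp only [Nat.succ_sub_succ, Nat.sub_zero, Nat.choose_zero_right, Nat.cast_one, fpow_zero,
    one_mul, mul_one]
  have hs : ∀ i ∈ Finset.range (n + 1),
      (-1 : R) ^ (n - i) * (Nat.choose (n + 1) (i + 1) : R) *
        (fpow C Q (i + 1) * fpow B P (n - i))
      = (-1 : R) ^ (n - i) * (Nat.choose n i : R) * (fpow C Q (i + 1) * fpow B P (n - i))
        + (-1 : R) ^ (n - i) * (Nat.choose n (i + 1) : R) *
            (fpow C Q (i + 1) * fpow B P (n - i)) := by
    intro i _
    rw [Nat.choose_succ_succ]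
    push_cast
    ring
  rw [Finset.sum_congr rfl hs, Finset.sum_add_distrib]
  have hU : (∑ ℓ ∈ Finset.range (n + 1),
        (-1 : R) ^ (n - ℓ) * (Nat.choose n ℓ : R) * (fpow C Q ℓ * fpow B P (n - ℓ + 1)))
      = (∑ i ∈ Finset.range n,
          (-1 : R) ^ (n - (i + 1)) * (Nat.choose n (i + 1) : R) *
            (fpow C Q (i + 1) * fpow B P (n - (i + 1) + 1)))
        + (-1 : R) ^ n * fpow B P (n + 1) := by
    rw [Finset.sum_range_succ']
    simp [fpow_zero]
  have hB2 : (∑ i ∈ Finset.range (n + 1),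
        (-1 : R) ^ (n - i) * (Nat.choose n (i + 1) : R) * (fpow C Q (i + 1) * fpow B P (n - i)))
      = -(∑ i ∈ Finset.range n,
          (-1 : R) ^ (n - (i + 1)) * (Nat.choose n (i + 1) : R) *
            (fpow C Q (i + 1) * fpow B P (n - (i + 1) + 1))) := by
    rw [Finset.sum_range_succ]
    simp only [Nat.choose_succ_self, Nat.cast_zero, mul_zero, zero_mul, add_zero]
    rw [← Finset.sum_neg_distrib]
    refine Finset.sum_congr rfl fun i hi => ?_
    have hi' : i < n := Finset.mem_range.mp hi
    have h1 : n - i = (n - (i + 1)) + 1 := by omega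
    have h2 : n - (i + 1) + 1 = n - i := by omega
    rw [h2, h1, pow_succ]
    ring
  rw [hB2, hU]
  ring

/-- Front-peel recursion. -/
lemma AP_succ_front (n : ℕ) (C B Q P : R) :
    ambientPower (n + 1) C B Q P
      = (C + Q) * (C - Q) * ambientPower n C B (Q - 2) P
        - (B + P) * (B - P) * ambientPower n C B Q (P - 2) := by
  rw [AP_split, ambientPower_eq', ambientPower_eq', Finset.mul_sum, Finset.mul_sum]
  congr 1
  · refine Finset.sum_congr rfl fun ℓ _ => ?_
    rw [fpow_succ']
    ring
  · refine Finset.sum_congr rfl fun ℓ _ => ?_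
    rw [fpow_succ']
    ring

/-- Weighted sum lemma. -/
lemma weighted (n : ℕ) (C B Q P : R) :
    (∑ ℓ ∈ Finset.range (n + 2),
        (-1 : R) ^ (n + 1 - ℓ) * (Nat.choose (n + 1) ℓ : R) *
          (fpow C Q ℓ * fpow B P (n + 1 - ℓ)) * (ℓ : R))
      = ((n : R) + 1) * ((C + Q) * (C - Q)) * ambientPower n C B (Q - 2) P := by
  rw [Finset.sum_range_succ']
  simp only [Nat.cast_zero, mul_zero, add_zero, Nat.succ_sub_succ]
  rw [ambientPower_eq', Finset.mul_sum]
  refine Finset.sum_congr rfl fun i _ => ?_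
  have hcc : ((Nat.choose (n + 1) (i + 1) : ℕ) : R) * ((i : R) + 1)
      = ((n : R) + 1) * (Nat.choose n i : R) := by
    have := Nat.add_one_mul_choose_eq n i
    have h2 : ((Nat.succ n * Nat.choose n i : ℕ) : R)
        = ((Nat.choose (n + 1) (i + 1) * Nat.succ i : ℕ) : R) := by exact_mod_cast congrArg _ this
    push_cast at h2
    linear_combination -h2
  rw [fpow_succ']
  push_cast
  linear_combination ((-1 : R) ^ (n - i) * (fpow C (Q - 2) i * fpow B P (n - i)) *
    ((C + Q) * (C - Q))) * hcc

/-- Peeling the two extreme factors off `G`. -/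
lemma productForm_succ_succ (n : ℕ) (C B : R) :
    productForm (n + 2) C B
      = ((C + B + ((n : R) + 1)) * (C - B + ((n : R) + 1))) *
          ((C + B - ((n : R) + 1)) * (C - B - ((n : R) + 1))) * productForm n C B := by
  unfold productForm
  rw [Finset.prod_range_succ', Finset.prod_range_succ]
  have h : ∀ i ∈ Finset.range n,
      (C + B + ((n + 2 : ℕ) : R) - 1 - 2 * ((i + 1 : ℕ) : R)) *
        (C - B + ((n + 2 : ℕ) : R) - 1 - 2 * ((i + 1 : ℕ) : R))
      = (C + B + (n : R) - 1 - 2 * (i : R)) * (C - B + (n : R) - 1 - 2 * (i : R)) := by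
    intro i _
    push_cast
    ring
  rw [Finset.prod_congr rfl h]
  push_cast
  ring

lemma main_aux (C B : R) : ∀ m : ℕ, ∀ Q P : R, P + Q = (m : R) - 1 →
    ambientPower m C B Q P = productForm m C B := by
  intro m
  induction m using Nat.strong_induction_on with
  | _ m ih =>
    intro Q P hPQ
    match m, ih, hPQ with
    | 0, _, hPQ =>
      simp [ambientPower, productForm]
    | 1, _, hPQ =>
      push_cast at hPQ
      simp only [ambientPower, productForm]
      rw [Finset.sum_range_succ, Finset.sum_range_succ, Finset.sum_range_zero,
        Finset.prod_range_succ, Finset.prod_range_succ, Finset.prod_range_zero,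
        Finset.prod_range_one]
      simp only [Nat.choose_self, Nat.choose_zero_right, Nat.cast_one]
      push_cast
      linear_combination (P - Q) * hPQ
    | (n + 2), ih, hPQ =>
      have ih0 : ∀ Q' P' : R, P' + Q' = (n : R) - 1 →
          ambientPower n C B Q' P' = productForm n C B := ih n (by omega)
      push_cast at hPQ
      have hP : P = (n : R) + 1 - Q := by linear_combination hPQ
      subst hP
      have key : ambientPower (n + 2) C B Q ((n : R) + 1 - Q)
          = ∑ ℓ ∈ Finset.range (n + 2),
              (-1 : R) ^ (n + 1 - ℓ) * (Nat.choose (n + 1) ℓ : R) *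
                (fpow C Q ℓ * fpow B ((n : R) + 1 - Q) (n + 1 - ℓ)) *
                ((C ^ 2 - B ^ 2 + ((n : R) + 1) ^ 2 + 2 * ((n : R) + 1) * Q)
                  - 4 * ((n : R) + 1) * (ℓ : R)) := by
        rw [show n + 2 = (n + 1) + 1 from rfl, AP_split, ← Finset.sum_sub_distrib]
        refine Finset.sum_congr rfl fun ℓ hℓ => ?_
        have hℓ2 : ℓ < n + 2 := Finset.mem_range.mp hℓ
        have hc : ((n + 1 - ℓ : ℕ) : R) = (n : R) + 1 - (ℓ : R) := by
          rw [Nat.cast_sub (by omega)]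
          push_cast
          ring
        rw [fpow_succ C Q ℓ, fpow_succ B _ (n + 1 - ℓ), hc]
        ring
      have split2 : (∑ ℓ ∈ Finset.range (n + 2),
            (-1 : R) ^ (n + 1 - ℓ) * (Nat.choose (n + 1) ℓ : R) *
              (fpow C Q ℓ * fpow B ((n : R) + 1 - Q) (n + 1 - ℓ)) *
              ((C ^ 2 - B ^ 2 + ((n : R) + 1) ^ 2 + 2 * ((n : R) + 1) * Q)
                - 4 * ((n : R) + 1) * (ℓ : R)))
          = (C ^ 2 - B ^ 2 + ((n : R) + 1) ^ 2 + 2 * ((n : R) + 1) * Q) *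
              (∑ ℓ ∈ Finset.range (n + 2),
                (-1 : R) ^ (n + 1 - ℓ) * (Nat.choose (n + 1) ℓ : R) *
                  (fpow C Q ℓ * fpow B ((n : R) + 1 - Q) (n + 1 - ℓ)))
            - 4 * ((n : R) + 1) *
              (∑ ℓ ∈ Finset.range (n + 2),
                (-1 : R) ^ (n + 1 - ℓ) * (Nat.choose (n + 1) ℓ : R) *
                  (fpow C Q ℓ * fpow B ((n : R) + 1 - Q) (n + 1 - ℓ)) * (ℓ : R)) := by
        rw [Finset.mul_sum, Finset.mul_sum, ← Finset.sum_sub_distrib]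
        exact Finset.sum_congr rfl fun ℓ _ => by ring
      have hA1 : ambientPower (n + 1) C B Q ((n : R) + 1 - Q)
          = ((C + Q) * (C - Q)
              - (B + ((n : R) + 1 - Q)) * (B - ((n : R) + 1 - Q))) * productForm n C B := by
        rw [AP_succ_front]
        rw [ih0 (Q - 2) ((n : R) + 1 - Q) (by ring)]
        rw [ih0 Q ((n : R) + 1 - Q - 2) (by ring)]
        ring
      have hA0 : ambientPower n C B (Q - 2) ((n : R) + 1 - Q) = productForm n C B :=
        ih0 (Q - 2) ((n : R) + 1 - Q) (by ring)
      rw [key, split2, ← ambientPower_eq' (n + 1) C B Q ((n : R) + 1 - Q), hA1,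
        weighted n C B Q ((n : R) + 1 - Q), hA0, productForm_succ_succ]
      ring

end Stmt8Aux

theorem stmt8 {R : Type*} [CommRing R] (m : ℕ) (C B Q P : R)
    (hPQ : P + Q = (m : R) - 1) :
    ambientPower m C B Q P = productForm m C B :=
  Stmt8Aux.main_aux C B m Q P hPQ
end

section
/- Let R be a commutative ring, m a natural number, and C, B, Q elements of R. With A_{2m} and the weight convention P = m − 1 − Q as above, the recursion A_{2(m+1)}(C, B, Q) = A_{2m}(C−1, B, Q−1) · (C + m − B)(C + m + B) holds. -/
namespace Stmt9Aux

variable {R : Type*} [CommRing R]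

def FF (C Q : R) (ℓ : ℕ) : R :=
  ∏ i ∈ Finset.range ℓ, (C + Q - 2 * (i : R)) * (C - Q + 2 * (i : R))

def GG (B P : R) (k : ℕ) : R :=
  ∏ j ∈ Finset.range k, (B + P - 2 * (j : R)) * (B - P + 2 * (j : R))

lemma ambientPower_eq (m : ℕ) (C B Q P : R) :
    ambientPower m C B Q P =
      ∑ ℓ ∈ Finset.range (m + 1),
        (-1 : R) ^ (m - ℓ) * (Nat.choose m ℓ : R) * FF C Q ℓ * GG B P (m - ℓ) := rfl

lemma FF_succ (C Q : R) (ℓ : ℕ) :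
    FF C Q (ℓ + 1) = FF C Q ℓ * ((C + Q - 2 * (ℓ : R)) * (C - Q + 2 * (ℓ : R))) :=
  Finset.prod_range_succ _ _

lemma GG_succ (B P : R) (k : ℕ) :
    GG B P (k + 1) = GG B P k * ((B + P - 2 * (k : R)) * (B - P + 2 * (k : R))) :=
  Finset.prod_range_succ _ _

lemma FF_shift (C Q : R) (ℓ : ℕ) :
    (C + Q) * FF (C - 1) (Q - 1) ℓ = (C + Q - 2 * (ℓ : R)) * FF C Q ℓ := by
  induction ℓ with
  | zero => simp [FF]
  | succ n ih =>
    rw [FF_succ, FF_succ]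
    push_cast
    linear_combination ((C - 1 + (Q - 1) - 2 * (n : R)) * (C - 1 - (Q - 1) + 2 * (n : R))) * ih

lemma choose_aux1 (k e : ℕ) :
    (k + e + 2) * (k + e + 1).choose (k + 1) = (e + 1) * (k + e + 2).choose (k + 1) := by
  apply Nat.eq_of_mul_eq_mul_right (Nat.succ_pos k)
  have h2 : (k + e + 1).choose (k + 1) * (k + 1) = (k + e + 1).choose k * (e + 1) := by
    have := Nat.choose_succ_right_eq (k + e + 1) k
    simpa [show k + e + 1 - k = e + 1 from by omega] using this
  have h3 : (k + e + 2) * (k + e + 1).choose k = (k + e + 2).choose (k + 1) * (k + 1) := by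
    have := Nat.add_one_mul_choose_eq (k + e + 1) k
    simpa [Nat.succ_eq_add_one, show k + e + 1 + 1 = k + e + 2 from by omega] using this
  calc (k + e + 2) * (k + e + 1).choose (k + 1) * (k + 1)
      = (k + e + 2) * ((k + e + 1).choose (k + 1) * (k + 1)) := by ring
    _ = (k + e + 2) * ((k + e + 1).choose k * (e + 1)) := by rw [h2]
    _ = ((k + e + 2) * (k + e + 1).choose k) * (e + 1) := by ring
    _ = ((k + e + 2).choose (k + 1) * (k + 1)) * (e + 1) := by rw [h3]
    _ = (e + 1) * (k + e + 2).choose (k + 1) * (k + 1) := by ring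

lemma choose_aux2 (k e : ℕ) :
    (k + e + 2) * (k + e + 1).choose k = (k + 1) * (k + e + 2).choose (k + 1) := by
  have := Nat.add_one_mul_choose_eq (k + e + 1) k
  simp only [Nat.succ_eq_add_one, show k + e + 1 + 1 = k + e + 2 from by omega] at this
  rw [this, Nat.mul_comm]

lemma crux (m : ℕ) (C B Q : R) :
    ∑ ℓ ∈ Finset.range (m + 1),
      (-1 : R) ^ (m - ℓ) * (Nat.choose m ℓ : R) * FF C Q ℓ * GG B ((m : R) - Q) (m - ℓ) *
        ((C + Q) * ((C + Q - 2 * (ℓ : R)) * (C - Q + 2 * (ℓ : R))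
            - (B + ((m : R) - Q) - 2 * ((m - ℓ : ℕ) : R)) * (B - ((m : R) - Q) + 2 * ((m - ℓ : ℕ) : R)))
          - (C + (m : R) - B) * (C + (m : R) + B) * (C + Q - 2 * (ℓ : R))) = 0 := by
  set P : R := (m : R) - Q with hP
  set f : ℕ → R := fun ℓ => match ℓ with
    | 0 => 0
    | (k + 1) => 2 * (m : R) * (-1 : R) ^ (m - (k + 1)) * (Nat.choose (m - 1) k : R) *
        FF C Q (k + 1) * GG B P (m - k)
    with hf
  have key : ∀ ℓ ∈ Finset.range (m + 1),
      (-1 : R) ^ (m - ℓ) * (Nat.choose m ℓ : R) * FF C Q ℓ * GG B P (m - ℓ) *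
        ((C + Q) * ((C + Q - 2 * (ℓ : R)) * (C - Q + 2 * (ℓ : R))
            - (B + P - 2 * ((m - ℓ : ℕ) : R)) * (B - P + 2 * ((m - ℓ : ℕ) : R)))
          - (C + (m : R) - B) * (C + (m : R) + B) * (C + Q - 2 * (ℓ : R))) = f (ℓ + 1) - f ℓ := by
    intro ℓ hℓ
    rw [Finset.mem_range] at hℓ
    match ℓ with
    | 0 =>
      match m with
      | 0 =>
        simp only [hf, hP, FF, GG, Finset.prod_range_zero, Nat.cast_zero, Nat.sub_zero,
          Nat.choose_zero_right, Nat.cast_one]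
        push_cast
        ring
      | (n + 1) =>
        simp only [hf, hP, FF, Nat.sub_zero, Nat.zero_add, Nat.add_sub_cancel,
          Nat.choose_zero_right, Finset.prod_range_one, Finset.prod_range_zero, Nat.cast_zero,
          Nat.cast_one, Nat.succ_sub_one]
        push_cast
        ring
    | (k + 1) =>
      have hk : k + 1 ≤ m := by omega
      obtain ⟨d, hd⟩ := Nat.exists_eq_add_of_le hk
      subst hd
      match d with
      | 0 =>
        simp only [hf, hP,
          show k + 1 + 0 - (k + 1) = 0 from by omega,
          show k + 1 + 0 - (k + 1 + 1) = 0 from by omega,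
          show k + 1 + 0 - k = 1 from by omega,
          show k + 1 + 0 - 1 = k from by omega,
          show k + 1 + 0 = k + 1 from by omega,
          Nat.choose_self, Nat.choose_succ_self, Nat.cast_zero, Nat.cast_one]
        simp only [GG, Finset.prod_range_one, Finset.prod_range_zero, Nat.cast_zero]
        push_cast
        ring
      | (e + 1) =>
        have c1 : ((k + e + 2 : ℕ) : R) * ((k + e + 1).choose (k + 1) : R)
            = ((e + 1 : ℕ) : R) * ((k + e + 2).choose (k + 1) : R) := by
          exact_mod_cast congrArg (Nat.cast (R := R)) (choose_aux1 k e)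
        have c2 : ((k + e + 2 : ℕ) : R) * ((k + e + 1).choose k : R)
            = ((k + 1 : ℕ) : R) * ((k + e + 2).choose (k + 1) : R) := by
          exact_mod_cast congrArg (Nat.cast (R := R)) (choose_aux2 k e)
        simp only [hf, hP,
          show k + 1 + (e + 1) = k + e + 2 from by omega,
          show k + e + 2 - (k + 1) = e + 1 from by omega,
          show k + e + 2 - (k + 1 + 1) = e from by omega,
          show k + e + 2 - k = e + 1 + 1 from by omega,
          show k + e + 2 - 1 = k + e + 1 from by omega]
        rw [FF_succ C Q (k + 1), GG_succ B (((k + e + 2 : ℕ) : R) - Q) (e + 1)]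
        push_cast at c1 c2 ⊢
        linear_combination (-2 : R) * (-1 : R) ^ e * FF C Q (k + 1)
            * GG B ((k : R) + (e : R) + 2 - Q) (e + 1)
            * ((C + Q - 2 * ((k : R) + 1)) * (C - Q + 2 * ((k : R) + 1))) * c1
          + (-2 : R) * (-1 : R) ^ e * FF C Q (k + 1)
            * GG B ((k : R) + (e : R) + 2 - Q) (e + 1)
            * ((B + ((k : R) + (e : R) + 2 - Q) - 2 * ((e : R) + 1))
              * (B - ((k : R) + (e : R) + 2 - Q) + 2 * ((e : R) + 1))) * c2
  rw [Finset.sum_congr rfl key, Finset.sum_range_sub f]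
  have hf0 : f 0 = 0 := rfl
  rw [hf0, sub_zero]
  match m with
  | 0 => simp [hf]
  | (n + 1) =>
    simp only [hf]
    rw [show n + 1 - 1 = n from rfl, Nat.choose_succ_self]
    push_cast
    ring

lemma LHS_eq (m : ℕ) (C B Q P : R) :
    (∑ ℓ ∈ Finset.range (m + 1 + 1),
        (-1 : R) ^ (m + 1 - ℓ) * ((m + 1).choose ℓ : R) * FF C Q ℓ * GG B P (m + 1 - ℓ)) =
      ∑ ℓ ∈ Finset.range (m + 1),
        (-1 : R) ^ (m - ℓ) * (m.choose ℓ : R) * FF C Q ℓ * GG B P (m - ℓ) *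
          ((C + Q - 2 * (ℓ : R)) * (C - Q + 2 * (ℓ : R))
            - (B + P - 2 * ((m - ℓ : ℕ) : R)) * (B - P + 2 * ((m - ℓ : ℕ) : R))) := by
  rw [Finset.sum_range_succ']
  have h1 : ∀ ℓ ∈ Finset.range (m + 1),
      (-1 : R) ^ (m + 1 - (ℓ + 1)) * ((m + 1).choose (ℓ + 1) : R) * FF C Q (ℓ + 1) *
          GG B P (m + 1 - (ℓ + 1))
        = (-1 : R) ^ (m - ℓ) * (m.choose ℓ : R) * FF C Q (ℓ + 1) * GG B P (m - ℓ)
          + (-1 : R) ^ (m - ℓ) * (m.choose (ℓ + 1) : R) * FF C Q (ℓ + 1) * GG B P (m - ℓ) := by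
    intro ℓ _
    rw [Nat.choose_succ_succ]
    push_cast; ring
  rw [Finset.sum_congr rfl h1, Finset.sum_add_distrib, add_assoc]
  have h2 : (∑ ℓ ∈ Finset.range (m + 1),
        (-1 : R) ^ (m - ℓ) * (m.choose (ℓ + 1) : R) * FF C Q (ℓ + 1) * GG B P (m - ℓ))
      + (-1 : R) ^ (m + 1 - 0) * ((m + 1).choose 0 : R) * FF C Q 0 * GG B P (m + 1 - 0)
      = ∑ ℓ ∈ Finset.range (m + 1 + 1),
          (-1 : R) ^ (m + 1 - ℓ) * (m.choose ℓ : R) * FF C Q ℓ * GG B P (m + 1 - ℓ) := by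
    conv_rhs => rw [Finset.sum_range_succ']
    simp [Nat.succ_sub_succ]
  rw [h2]
  conv_lhs => rhs; rw [Finset.sum_range_succ]
  simp only [Nat.choose_succ_self, Nat.cast_zero, mul_zero, zero_mul, add_zero]
  have h4 : ∀ ℓ ∈ Finset.range (m + 1),
      (-1 : R) ^ (m + 1 - ℓ) * (m.choose ℓ : R) * FF C Q ℓ * GG B P (m + 1 - ℓ)
      = -((-1 : R) ^ (m - ℓ) * (m.choose ℓ : R) * FF C Q ℓ *
          (GG B P (m - ℓ) * ((B + P - 2 * ((m - ℓ : ℕ) : R)) * (B - P + 2 * ((m - ℓ : ℕ) : R))))) := by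
    intro ℓ hℓ
    rw [Finset.mem_range] at hℓ
    rw [show m + 1 - ℓ = (m - ℓ) + 1 from by omega, GG_succ, pow_succ]
    ring
  rw [Finset.sum_congr rfl h4, ← Finset.sum_add_distrib]
  apply Finset.sum_congr rfl
  intro ℓ _
  rw [FF_succ]
  ring

lemma keymul (m : ℕ) (C B Q : R) :
    (C + Q) * ambientPower (m + 1) C B Q ((m : R) - Q) =
      ((C + Q) * ambientPower m (C - 1) B (Q - 1) ((m : R) - Q)) *
        ((C + (m : R) - B) * (C + (m : R) + B)) := by
  rw [ambientPower_eq, ambientPower_eq, LHS_eq]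
  rw [Finset.mul_sum, Finset.mul_sum, Finset.sum_mul]
  rw [← sub_eq_zero, ← Finset.sum_sub_distrib, ← crux m C B Q]
  apply Finset.sum_congr rfl
  intro ℓ hℓ
  have hsh := FF_shift C Q ℓ
  linear_combination (-((-1 : R) ^ (m - ℓ) * (m.choose ℓ : R) * GG B ((m : R) - Q) (m - ℓ) *
      ((C + (m : R) - B) * (C + (m : R) + B)))) * hsh

lemma ambientPower_map {R S : Type*} [CommRing R] [CommRing S] (f : R →+* S) (m : ℕ)
    (C B Q P : R) :
    f (ambientPower m C B Q P) = ambientPower m (f C) (f B) (f Q) (f P) := by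
  simp only [ambientPower, map_sum, map_mul, map_prod, map_pow, map_sub, map_add, map_neg,
    map_one, map_natCast, map_ofNat]

end Stmt9Aux

theorem stmt9 {R : Type*} [CommRing R] (m : ℕ) (C B Q : R) :
    ambientPower (m + 1) C B Q ((m : R) - Q) =
      ambientPower m (C - 1) B (Q - 1) ((m : R) - Q) *
        ((C + (m : R) - B) * (C + (m : R) + B)) := by
  have hkey : ambientPower (m + 1) (MvPolynomial.X 0 : MvPolynomial (Fin 3) ℤ)
        (MvPolynomial.X 1) (MvPolynomial.X 2)
        ((m : MvPolynomial (Fin 3) ℤ) - MvPolynomial.X 2)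
      = ambientPower m (MvPolynomial.X 0 - 1) (MvPolynomial.X 1) (MvPolynomial.X 2 - 1)
          ((m : MvPolynomial (Fin 3) ℤ) - MvPolynomial.X 2) *
        ((MvPolynomial.X 0 + (m : MvPolynomial (Fin 3) ℤ) - MvPolynomial.X 1) *
          (MvPolynomial.X 0 + (m : MvPolynomial (Fin 3) ℤ) + MvPolynomial.X 1)) := by
    have hne : (MvPolynomial.X 0 + MvPolynomial.X 2 : MvPolynomial (Fin 3) ℤ) ≠ 0 := by
      intro h
      have h2 := congrArg (MvPolynomial.eval (fun _ : Fin 3 => (1 : ℤ))) h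
      simp at h2
    apply mul_left_cancel₀ hne
    rw [show (MvPolynomial.X 0 + MvPolynomial.X 2 : MvPolynomial (Fin 3) ℤ) *
        (ambientPower m (MvPolynomial.X 0 - 1) (MvPolynomial.X 1) (MvPolynomial.X 2 - 1)
          ((m : MvPolynomial (Fin 3) ℤ) - MvPolynomial.X 2) *
        ((MvPolynomial.X 0 + (m : MvPolynomial (Fin 3) ℤ) - MvPolynomial.X 1) *
          (MvPolynomial.X 0 + (m : MvPolynomial (Fin 3) ℤ) + MvPolynomial.X 1)))
      = ((MvPolynomial.X 0 + MvPolynomial.X 2) *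
          ambientPower m (MvPolynomial.X 0 - 1) (MvPolynomial.X 1) (MvPolynomial.X 2 - 1)
          ((m : MvPolynomial (Fin 3) ℤ) - MvPolynomial.X 2)) *
        ((MvPolynomial.X 0 + (m : MvPolynomial (Fin 3) ℤ) - MvPolynomial.X 1) *
          (MvPolynomial.X 0 + (m : MvPolynomial (Fin 3) ℤ) + MvPolynomial.X 1)) from by ring]
    exact Stmt9Aux.keymul m (MvPolynomial.X 0) (MvPolynomial.X 1) (MvPolynomial.X 2)
  have happ := congrArg ((MvPolynomial.aeval (R := ℤ) ![C, B, Q]).toRingHom :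
      MvPolynomial (Fin 3) ℤ →+* R) hkey
  rw [map_mul, Stmt9Aux.ambientPower_map, Stmt9Aux.ambientPower_map] at happ
  simpa using happ
end
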